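/- arXiv:1407.6382 — 8 statements merged into one kernel-verified Lean document; each statement's English description precedes it below -/
import Mathlib

section
/- For a 3×3 real antisymmetric matrix X = ![![0,-c,b],![c,0,-a],![-b,a,0]] with λ = √(a²+b²+c²) ≠ 0, the matrix exponential satisfies exp(X) = I + (sin λ / λ) X + ((1 - cos λ)/λ²) X² (the Euler–Rodrigues formula). -/
/-!
The matrix `X` satisfies `X³ = -λ² X`, so its odd powers are `X^(2k+1) = (-λ²)^k X` and its even
powers beyond the zeroth are `X^(2k+2) = (-λ²)^k X²`. Splitting the exponential series into its
constant term, odd part and even part therefore leaves the scalar series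
`∑ (-λ²)^k / (2k+1)! = sin λ / λ` and `∑ (-λ²)^k / (2k+2)! = (1 - cos λ) / λ²`, which come from
the Taylor series of `sin` and `cos`.
-/

open Matrix NormedSpace
open scoped Nat

theorem pow_two_mul_add_one_of_pow_three_eq_smul {R A : Type*} [CommSemiring R] [Semiring A]
    [Algebra R A] {x : A} {s : R} (hx : x ^ 3 = s • x) (k : ℕ) :
    x ^ (2 * k + 1) = s ^ k • x := by
  induction k with
  | zero => simp
  | succ k ih =>
    rw [show 2 * (k + 1) + 1 = 2 * k + 1 + 2 by ring, pow_add, ih, smul_mul_assoc,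
      ← pow_succ', hx, smul_smul, pow_succ]

theorem Real.hasSum_sin_div {t : ℝ} (ht : t ≠ 0) :
    HasSum (fun k : ℕ => (-t ^ 2) ^ k / (2 * k + 1)!) (Real.sin t / t) :=
  ((Real.hasSum_sin t).div_const t).congr_fun fun k => by
    rw [neg_pow, ← pow_mul, pow_succ]
    field_simp

theorem Real.hasSum_one_sub_cos_div_sq {t : ℝ} (ht : t ≠ 0) :
    HasSum (fun k : ℕ => (-t ^ 2) ^ k / (2 * k + 2)!) ((1 - Real.cos t) / t ^ 2) := by
  have h := ((hasSum_nat_add_iff' 1).mpr (Real.hasSum_cos t)).div_const (-t ^ 2)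
  rw [Finset.sum_range_one, div_neg, ← neg_div] at h
  simp only [pow_zero, mul_zero, Nat.factorial_zero, Nat.cast_one, div_one, mul_one, neg_sub] at h
  refine h.congr_fun fun k => ?_
  rw [neg_pow, ← pow_mul, pow_succ, show 2 * (k + 1) = 2 * k + 2 by ring]
  field_simp
  ring

theorem exp_eq_of_pow_three_eq_neg_sq_smul {A : Type*} [Ring A] [Algebra ℝ A]
    [TopologicalSpace A] [IsTopologicalRing A] [ContinuousSMul ℝ A] [T2Space A] {x : A} {t : ℝ}
    (ht : t ≠ 0) (hx : x ^ 3 = (-t ^ 2) • x) :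
    exp x = 1 + (Real.sin t / t) • x + ((1 - Real.cos t) / t ^ 2) • x ^ 2 := by
  have hodd := pow_two_mul_add_one_of_pow_three_eq_smul hx
  have hsin : HasSum (fun k : ℕ => ((2 * k + 1)! : ℝ)⁻¹ • x ^ (2 * k + 1))
      ((Real.sin t / t) • x) := by
    refine ((Real.hasSum_sin_div ht).smul_const x).congr_fun fun k => ?_
    rw [hodd, smul_smul, div_eq_inv_mul]
  have hcos : HasSum (fun k : ℕ => ((2 * k + 2)! : ℝ)⁻¹ • x ^ (2 * k + 2))
      (((1 - Real.cos t) / t ^ 2) • x ^ 2) := by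
    refine ((Real.hasSum_one_sub_cos_div_sq ht).smul_const (x ^ 2)).congr_fun fun k => ?_
    rw [pow_succ, hodd, smul_mul_assoc, ← sq, smul_smul, div_eq_inv_mul]
  have hpos := HasSum.even_add_odd (f := fun n : ℕ => ((n + 1)! : ℝ)⁻¹ • x ^ (n + 1)) hsin hcos
  have hexp := HasSum.zero_add (f := fun n : ℕ => (n ! : ℝ)⁻¹ • x ^ n) hpos
  rw [Nat.factorial_zero, Nat.cast_one, inv_one, pow_zero, one_smul, ← add_assoc] at hexp
  rw [exp_eq_tsum ℝ]
  exact hexp.tsum_eq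

theorem Matrix.skew_fin_three_pow_three {R : Type*} [CommRing R] (a b c : R) :
    !![0, -c, b; c, 0, -a; -b, a, 0] ^ 3 =
      (-(a ^ 2 + b ^ 2 + c ^ 2)) • !![0, -c, b; c, 0, -a; -b, a, 0] := by
  ext i j
  fin_cases i <;> fin_cases j <;> simp [pow_succ, Matrix.mul_apply, Fin.sum_univ_succ] <;> ring

theorem euler_rodrigues (a b c : ℝ)
    (X : Matrix (Fin 3) (Fin 3) ℝ)
    (hX : X = !![0, -c, b; c, 0, -a; -b, a, 0])
    (lam : ℝ) (hlam : lam = Real.sqrt (a ^ 2 + b ^ 2 + c ^ 2)) (hne : lam ≠ 0) :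
    exp X = 1 + (Real.sin lam / lam) • X + ((1 - Real.cos lam) / lam ^ 2) • X ^ 2 := by
  refine exp_eq_of_pow_three_eq_neg_sq_smul hne ?_
  rw [hlam, Real.sq_sqrt (by positivity), hX]
  exact Matrix.skew_fin_three_pow_three a b c
end

section
/- If X is an n×n complex matrix satisfying X² + 2iγX + λ²I = 0 with γ, λ nonzero reals, then exp(X) = e^{-iγ}[(cos σ + (iγ/σ) sin σ)·I + (sin σ / σ)·X], where σ is the positive square root of λ² + γ². -/
/-!
Completing the square, `Y = X + iγ` satisfies `Y² = -σ²`. Splitting the exponential series of `Y`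
into even and odd powers gives `exp Y = cos σ + (sin σ / σ) Y`, and since `-iγ` is a scalar,
`exp X = e^{-iγ} exp Y`.
-/

open Matrix NormedSpace Complex

section TopologicalAlgebra

variable {A : Type*} [Ring A] [Algebra ℂ A] [TopologicalSpace A] [IsTopologicalRing A]
  [ContinuousSMul ℂ A] [T2Space A]

theorem NormedSpace.exp_eq_cos_smul_one_add_of_sq_eq {a : A} {s : ℂ} (hs : s ≠ 0)
    (h : a ^ 2 = -(s ^ 2) • 1) :
    exp a = Complex.cos s • 1 + (Complex.sin s / s) • a := by
  have heven (k : ℕ) : a ^ (2 * k) = ((-1) ^ k * s ^ (2 * k)) • 1 := by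
    rw [pow_mul, h, smul_pow, one_pow, neg_pow, ← pow_mul]
  rw [exp_eq_tsum ℂ]
  refine (HasSum.even_add_odd ?_ ?_).tsum_eq
  · convert (Complex.hasSum_cos s).smul_const (1 : A) using 2 with k
    rw [heven, smul_smul, inv_mul_eq_div, mul_comm]
  · convert ((Complex.hasSum_sin s).div_const s).smul_const a using 2 with k
    rw [pow_succ, heven, smul_mul_assoc, one_mul, smul_smul]
    congr 1
    field_simp
    ring

end TopologicalAlgebra

section NormedAlgebra

variable {A : Type*} [NormedRing A] [NormedAlgebra ℂ A] [CompleteSpace A]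

theorem NormedSpace.exp_eq_of_sq_add_smul_add_smul_one_eq_zero {a : A} {b c s : ℂ}
    (hs : s ≠ 0) (hs2 : s ^ 2 = c - b ^ 2) (h : a ^ 2 + (2 * b) • a + c • 1 = 0) :
    exp a = Complex.exp (-b) •
      ((Complex.cos s + b / s * Complex.sin s) • 1 + (Complex.sin s / s) • a) := by
  let : NormedAlgebra ℚ A := .restrictScalars ℚ ℂ A
  have hsq : (a + b • 1) ^ 2 = -(s ^ 2) • 1 := by
    have hexpand : (a + b • 1) ^ 2 = a ^ 2 + (2 * b) • a + (b ^ 2) • 1 := by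
      simp only [sq, add_mul, mul_add, one_mul, mul_one, smul_mul_assoc, mul_smul_comm]
      module
    rw [hexpand, hs2]
    linear_combination (norm := module) h
  have hcomm : Commute ((-b) • (1 : A)) (a + b • 1) := (Commute.one_left _).smul_left _
  calc exp a = exp ((-b) • (1 : A) + (a + b • 1)) := by
        rw [neg_smul, add_comm a, neg_add_cancel_left]
    _ = Complex.exp (-b) • exp (a + b • 1) := by
      rw [exp_add_of_commute hcomm, ← Algebra.algebraMap_eq_smul_one, ← algebraMap_exp_comm,
        Complex.exp_eq_exp_ℂ, Algebra.algebraMap_eq_smul_one, smul_one_mul]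
    _ = _ := by
      rw [exp_eq_cos_smul_one_add_of_sq_eq hs hsq]
      module

end NormedAlgebra

theorem exp_of_quadratic_shifted_general {n : ℕ} (X : Matrix (Fin n) (Fin n) ℂ)
    (γ lam : ℝ) (hlam : lam ≠ 0)
    (hmin : X ^ 2 + (2 * Complex.I * (γ : ℂ)) • X
        + ((lam : ℂ) ^ 2) • (1 : Matrix (Fin n) (Fin n) ℂ) = 0)
    (σ : ℝ) (hσ : σ = Real.sqrt (lam ^ 2 + γ ^ 2)) :
    NormedSpace.exp X = Complex.exp (-(Complex.I * (γ : ℂ))) •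
      ((((Real.cos σ : ℂ) + Complex.I * (γ : ℂ) / (σ : ℂ) * (Real.sin σ : ℂ))) •
          (1 : Matrix (Fin n) (Fin n) ℂ)
        + (((Real.sin σ / σ : ℝ) : ℂ)) • X) := by
  have hσ0 : (σ : ℂ) ≠ 0 := by
    rw [ofReal_ne_zero, hσ]
    positivity
  have hσ2 : (σ : ℂ) ^ 2 = (lam : ℂ) ^ 2 - (I * γ) ^ 2 := by
    have hσ2 : σ ^ 2 = lam ^ 2 + γ ^ 2 := by rw [hσ, Real.sq_sqrt (by positivity)]
    have hσ2C : (σ : ℂ) ^ 2 = (lam : ℂ) ^ 2 + (γ : ℂ) ^ 2 := mod_cast hσ2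
    linear_combination hσ2C + (γ : ℂ) ^ 2 * I_sq
  rw [mul_assoc] at hmin
  -- `exp` does not depend on the norm, so any matrix norm serves to apply the Banach-algebra lemma.
  refine (open scoped Norms.Operator in
    exp_eq_of_sq_add_smul_add_smul_one_eq_zero hσ0 hσ2 hmin).trans ?_
  rw [ofReal_cos, ofReal_div, ofReal_sin]

theorem exp_of_quadratic_shifted {n : ℕ} (X : Matrix (Fin n) (Fin n) ℂ)
    (γ lam : ℝ) (hγ : γ ≠ 0) (hlam : lam ≠ 0)
    (hmin : X ^ 2 + (2 * Complex.I * (γ : ℂ)) • X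
        + ((lam : ℂ) ^ 2) • (1 : Matrix (Fin n) (Fin n) ℂ) = 0)
    (σ : ℝ) (hσ : σ = Real.sqrt (lam ^ 2 + γ ^ 2)) :
    NormedSpace.exp X = Complex.exp (-(Complex.I * (γ : ℂ))) •
      ((((Real.cos σ : ℂ) + Complex.I * (γ : ℂ) / (σ : ℂ) * (Real.sin σ : ℂ))) •
          (1 : Matrix (Fin n) (Fin n) ℂ)
        + (((Real.sin σ / σ : ℝ) : ℂ)) • X) :=
  exp_of_quadratic_shifted_general X γ lam hlam hmin σ hσ
end

section
/- If X is an n×n complex matrix satisfying X³ + c²X = 0 with c a nonzero real, then exp(X) = I + (sin c / c)·X + ((1 - cos c)/c²)·X². -/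
open Matrix NormedSpace
open scoped Nat

/-!
Put `b = c i`, so that `X³ = b² X` with `b ≠ 0`. Then `X` is annihilated by `t (t - b) (t + b)`,
and the Lagrange idempotents `P₊ = (X² + bX) / 2b²`, `P₋ = (X² - bX) / 2b²`, `P₀ = 1 - X² / b²`
satisfy `X ^ m = b ^ m P₊ + (-b) ^ m P₋ + 0 ^ m P₀` for every `m` (with `0 ^ 0 = 1`).
Summing the exponential series termwise gives `exp X = e ^ b P₊ + e ^ (-b) P₋ + P₀`, that is
`1 + (sinh b / b) X + ((cosh b - 1) / b²) X²`, and `sinh (c i) = i sin c`, `cosh (c i) = cos c`.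
-/

theorem pow_eq_of_pow_three_eq_sq_smul {𝕂 A : Type*} [Field 𝕂] [NeZero (2 : 𝕂)] [Ring A]
    [Algebra 𝕂 A] {X : A} {b : 𝕂} (hb : b ≠ 0) (hX : X ^ 3 = b ^ 2 • X) (m : ℕ) :
    X ^ m = b ^ m • ((2 * b ^ 2)⁻¹ • (X ^ 2 + b • X))
      + (-b) ^ m • ((2 * b ^ 2)⁻¹ • (X ^ 2 - b • X)) + (0 : 𝕂) ^ m • (1 - (b ^ 2)⁻¹ • X ^ 2) := by
  induction m with
  | zero =>
    simp only [pow_zero, one_smul]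
    match_scalars <;> field_simp <;> ring
  | succ m ih =>
    have hX2 : X ^ 2 * X = b ^ 2 • X := by rw [← pow_succ, hX]
    rw [pow_succ, ih]
    simp only [add_mul, sub_mul, smul_mul_assoc, one_mul, hX2, ← sq]
    match_scalars <;> field_simp <;> ring

section

variable {A : Type*} [Ring A] [Algebra ℂ A] [TopologicalSpace A] [IsTopologicalRing A]
  [ContinuousSMul ℂ A] [T2Space A]

theorem exp_eq_sum_smul_of_pow_eq {ι : Type*} [Fintype ι] {X : A} (μ : ι → ℂ) (P : ι → A)
    (hpow : ∀ m : ℕ, X ^ m = ∑ i, μ i ^ m • P i) :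
    exp X = ∑ i, Complex.exp (μ i) • P i := by
  have hsum : HasSum (fun m : ℕ => (m !⁻¹ : ℂ) • X ^ m) (∑ i, Complex.exp (μ i) • P i) := by
    simp only [hpow, Finset.smul_sum, smul_smul]
    exact hasSum_sum fun i _ =>
      (Complex.exp_eq_exp_ℂ ▸ exp_series_hasSum_exp' (𝕂 := ℂ) (μ i)).smul_const (P i)
  rw [exp_eq_tsum ℂ]
  exact hsum.tsum_eq

theorem exp_eq_of_pow_three_eq_sq_smul {X : A} {b : ℂ} (hb : b ≠ 0) (hX : X ^ 3 = b ^ 2 • X) :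
    exp X = 1 + (Complex.sinh b / b) • X + ((Complex.cosh b - 1) / b ^ 2) • X ^ 2 := by
  rw [exp_eq_sum_smul_of_pow_eq ![b, -b, 0]
    ![(2 * b ^ 2)⁻¹ • (X ^ 2 + b • X), (2 * b ^ 2)⁻¹ • (X ^ 2 - b • X), 1 - (b ^ 2)⁻¹ • X ^ 2]
    fun m => by simpa [Fin.sum_univ_three] using pow_eq_of_pow_three_eq_sq_smul hb hX m]
  simp only [Fin.sum_univ_three, Fin.isValue, cons_val, Complex.exp_zero, one_smul]
  rw [Complex.sinh, Complex.cosh]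
  match_scalars <;> field_simp <;> ring

end

theorem exp_of_cubic_minpoly {n : ℕ} (X : Matrix (Fin n) (Fin n) ℂ)
    (c : ℝ) (hc : c ≠ 0)
    (hmin : X ^ 3 + ((c : ℂ) ^ 2) • X = 0) :
    exp X = (1 : Matrix (Fin n) (Fin n) ℂ)
      + (((Real.sin c / c : ℝ) : ℂ)) • X
      + ((((1 - Real.cos c) / c ^ 2 : ℝ) : ℂ)) • X ^ 2 := by
  have hb : (c : ℂ) * Complex.I ≠ 0 :=
    mul_ne_zero (Complex.ofReal_ne_zero.mpr hc) Complex.I_ne_zero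
  have hX : X ^ 3 = ((c : ℂ) * Complex.I) ^ 2 • X := by
    rw [eq_neg_of_add_eq_zero_left hmin, mul_pow, Complex.I_sq, mul_neg_one, neg_smul]
  have hsin : Complex.sin c * Complex.I / (c * Complex.I) = ((Real.sin c / c : ℝ) : ℂ) := by
    push_cast
    field_simp
  have hcos : (Complex.cos c - 1) / (c * Complex.I) ^ 2 = (((1 - Real.cos c) / c ^ 2 : ℝ) : ℂ) := by
    push_cast
    rw [mul_pow, Complex.I_sq]
    field_simp
    ring
  rw [exp_eq_of_pow_three_eq_sq_smul hb hX, Complex.sinh_mul_I, Complex.cosh_mul_I, hsin, hcos]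
end

section
/- If X is an n×n complex matrix satisfying X⁴ + θ²X² + λ²I = 0 where θ, λ are nonzero reals with θ⁴ > 4λ², then exp(X) = (1/(b²-a²))·[((b sin a - a sin b)/(ab))·X³ + (cos a - cos b)·X² + ((b³ sin a - a³ sin b)/(ab))·X + (b² cos a - a² cos b)·I], where a, b are the positive reals determined by a² + b² = θ², a²b² = λ², a ≠ b. -/
/-!
Since `(t² + a²)(t² + b²)` annihilates `X` and `a² ≠ b²`, the Lagrange projector
`P = (X² + b²) / (b² - a²)` splits `X = XP + X(1 - P)` into two commuting pieces with
`(XP)² = -a² P` and `(X(1 - P))² = -b² (1 - P)`. Each piece is a combination of two orthogonal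
idempotents with eigenvalues `± a i` (resp. `± b i`), whose exponentials are read off directly, so
`exp X = cos a P + (sin a / a) XP + cos b (1 - P) + (sin b / b) X(1 - P)`; expanding `P` gives the
formula.
-/

open Matrix NormedSpace
open scoped Nat

section Quadratic

variable {K A : Type*} [Field K] [Ring A] [Algebra K A]

theorem spectral_projection_of_mul_sub_eq_zero {Y : A} {α β : K} (hαβ : α ≠ β)
    (hY : (Y - α • 1) * (Y - β • 1) = 0) :
    let P := (α - β)⁻¹ • (Y - β • 1)
    IsIdempotentElem P ∧ Y * P = α • P ∧ Y * (1 - P) = β • (1 - P) := by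
  intro P
  have hsub : α - β ≠ 0 := sub_ne_zero.mpr hαβ
  have hYβ : Y * (Y - β • 1) = α • (Y - β • 1) := by
    rw [← sub_eq_zero, ← hY]
    simp only [mul_sub, sub_mul, smul_mul_assoc, mul_smul_comm, one_mul, mul_one]
    module
  have hYP : Y * P = α • P := by
    rw [mul_smul_comm, hYβ, smul_comm]
  refine ⟨?_, hYP, ?_⟩
  · rw [IsIdempotentElem, smul_mul_assoc, sub_mul, hYP, smul_mul_assoc, one_mul, ← sub_smul,
      smul_smul, inv_mul_cancel₀ hsub, one_smul]
  · have hP : (α - β) • P = Y - β • 1 := smul_inv_smul₀ hsub _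
    rw [mul_sub, mul_one, hYP, smul_sub, sub_eq_sub_iff_sub_eq_sub, ← sub_smul, hP]

end Quadratic

section Idempotent

variable {𝕂 A : Type*} [RCLike 𝕂] [NormedRing A] [NormedAlgebra 𝕂 A] [CompleteSpace A]

theorem exp_smul_of_isIdempotentElem {E : A} (hE : IsIdempotentElem E) (z : 𝕂) :
    exp (z • E) = 1 - E + exp z • E := by
  have hterm : ∀ n : ℕ, (n ! : 𝕂)⁻¹ • (z • E) ^ n
      = ((n ! : 𝕂)⁻¹ • z ^ n) • E + if n = 0 then 1 - E else 0 := by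
    rintro (_ | n)
    · simp
    · rw [smul_pow, hE.pow_succ_eq, smul_smul, if_neg n.succ_ne_zero, add_zero, smul_eq_mul]
  have hsum := ((exp_series_hasSum_exp' (𝕂 := 𝕂) z).smul_const E).add (hasSum_ite_eq 0 (1 - E))
  simp only [← hterm] at hsum
  rw [(exp_series_hasSum_exp' (𝕂 := 𝕂) (z • E)).unique hsum, add_comm]

theorem exp_smul_add_smul_of_mul_eq_zero {E F : A} (hE : IsIdempotentElem E)
    (hF : IsIdempotentElem F) (hEF : E * F = 0) (hFE : F * E = 0) (z w : 𝕂) :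
    exp (z • E + w • F) = 1 - E - F + exp z • E + exp w • F := by
  have hcomm : Commute (z • E) (w • F) := by
    simp only [Commute, SemiconjBy, smul_mul_smul_comm, hEF, hFE, smul_zero]
  let +nondep : NormedAlgebra ℚ A := .restrictScalars ℚ 𝕂 A
  rw [exp_add_of_commute hcomm, exp_smul_of_isIdempotentElem hE,
    exp_smul_of_isIdempotentElem hF]
  simp only [mul_add, mul_sub, mul_one, mul_smul_comm, sub_mul, add_mul, one_mul,
    smul_mul_assoc, hEF, smul_zero, sub_zero, add_zero]
  abel

end Idempotent

section Complex

variable {A : Type*} [NormedRing A] [NormedAlgebra ℂ A] [CompleteSpace A]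

theorem exp_eq_of_sq_eq_neg_sq_smul {N P : A} {a : ℂ} (ha : a ≠ 0) (hP : IsIdempotentElem P)
    (hPN : P * N = N) (hNP : N * P = N) (hN : N ^ 2 = -a ^ 2 • P) :
    exp N = 1 - P + Complex.cos a • P + (Complex.sin a / a) • N := by
  -- the eigenprojections of `N` for the eigenvalues `± a i`
  set Ep : A := (2⁻¹ : ℂ) • (P - (Complex.I / a) • N)
  set Em : A := (2⁻¹ : ℂ) • (P + (Complex.I / a) • N)
  have hNN : N * N = -a ^ 2 • P := by rw [← sq, hN]
  have hEp : IsIdempotentElem Ep := by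
    simp only [IsIdempotentElem, Ep, mul_sub, sub_mul, smul_mul_assoc,
      mul_smul_comm, hP.eq, hPN, hNP, hNN, smul_smul]
    match_scalars <;> grind [Complex.I_sq]
  have hEm : IsIdempotentElem Em := by
    simp only [IsIdempotentElem, Em, mul_add, add_mul, smul_mul_assoc,
      mul_smul_comm, hP.eq, hPN, hNP, hNN, smul_smul]
    match_scalars <;> grind [Complex.I_sq]
  have hEpm : Ep * Em = 0 := by
    simp only [Ep, Em, mul_add, sub_mul, smul_mul_assoc,
      mul_smul_comm, hP.eq, hPN, hNP, hNN, smul_smul]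
    match_scalars <;> grind [Complex.I_sq]
  have hEmp : Em * Ep = 0 := by
    simp only [Ep, Em, mul_sub, add_mul, smul_mul_assoc,
      mul_smul_comm, hP.eq, hPN, hNP, hNN, smul_smul]
    match_scalars <;> grind [Complex.I_sq]
  have hsplit : N = (a * Complex.I) • Ep + (-(a * Complex.I)) • Em := by
    simp only [Ep, Em, smul_smul, smul_sub, smul_add]
    match_scalars <;> grind [Complex.I_sq]
  rw [hsplit, exp_smul_add_smul_of_mul_eq_zero hEp hEm hEpm hEmp, ← Complex.exp_eq_exp_ℂ,
    Complex.exp_mul_I, ← neg_mul, Complex.exp_mul_I, Complex.cos_neg, Complex.sin_neg]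
  simp only [Ep, Em, smul_smul, smul_sub, smul_add]
  match_scalars <;> grind [Complex.I_sq]

theorem exp_mul_of_isIdempotentElem {X P : A} {a : ℂ} (ha : a ≠ 0) (hP : IsIdempotentElem P)
    (hXP : Commute X P) (hX : X ^ 2 * P = -a ^ 2 • P) :
    exp (X * P) = 1 - P + Complex.cos a • P + (Complex.sin a / a) • (X * P) := by
  refine exp_eq_of_sq_eq_neg_sq_smul ha hP ?_ (by rw [mul_assoc, hP.eq]) ?_
  · rw [← mul_assoc, ← hXP.eq, mul_assoc, hP.eq]
  · rw [hXP.mul_pow, sq P, hP.eq, hX]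

theorem exp_eq_of_isIdempotentElem_of_commute {X P : A} {a b : ℂ} (ha : a ≠ 0) (hb : b ≠ 0)
    (hP : IsIdempotentElem P) (hXP : Commute X P) (hXa : X ^ 2 * P = -a ^ 2 • P)
    (hXb : X ^ 2 * (1 - P) = -b ^ 2 • (1 - P)) :
    exp X = Complex.cos a • P + (Complex.sin a / a) • (X * P)
      + Complex.cos b • (1 - P) + (Complex.sin b / b) • (X * (1 - P)) := by
  obtain ⟨Q, hQ⟩ : ∃ Q, 1 - P = Q := ⟨_, rfl⟩
  have hP' : 1 - Q = P := by rw [← hQ, sub_sub_cancel]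
  have hXQ : Commute X Q := hQ ▸ (Commute.one_right X).sub_right hXP
  have hPQ : P * Q = 0 := hQ ▸ hP.mul_one_sub_self
  have hQP : Q * P = 0 := hQ ▸ hP.one_sub_mul_self
  have hQQ : IsIdempotentElem Q := hQ ▸ hP.one_sub
  have hcomm : Commute (X * P) (X * Q) := by
    simp only [Commute, SemiconjBy, mul_assoc, hXP.symm.left_comm, hXQ.symm.left_comm, hPQ, hQP]
  have hsplit : X = X * P + X * Q := by rw [← mul_add, ← hQ, add_sub_cancel, mul_one]
  let +nondep : NormedAlgebra ℚ A := .restrictScalars ℚ ℂ A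
  rw [hQ] at hXb ⊢
  conv_lhs => rw [hsplit, exp_add_of_commute hcomm]
  rw [exp_mul_of_isIdempotentElem ha hP hXP hXa, exp_mul_of_isIdempotentElem hb hQQ hXQ hXb, hQ, hP']
  simp only [mul_add, add_mul, smul_mul_assoc, mul_smul_comm, mul_assoc, hXP.symm.left_comm,
    hXQ.symm.left_comm, hP.eq, hQQ.eq, hPQ, hQP, mul_zero, smul_zero, add_zero, zero_add]

end Complex

theorem exp_of_quartic_minpoly_general {n : ℕ} (X : Matrix (Fin n) (Fin n) ℂ)
    (θ lam : ℝ)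
    (hmin : X ^ 4 + ((θ : ℂ) ^ 2) • X ^ 2
        + ((lam : ℂ) ^ 2) • (1 : Matrix (Fin n) (Fin n) ℂ) = 0)
    (a b : ℝ) (ha : 0 < a) (hb : 0 < b) (hab : a ≠ b)
    (hsum : a ^ 2 + b ^ 2 = θ ^ 2) (hprod : a ^ 2 * b ^ 2 = lam ^ 2) :
    NormedSpace.exp X = (((1 / (b ^ 2 - a ^ 2) : ℝ) : ℂ)) •
      ((((( b * Real.sin a - a * Real.sin b) / (a * b) : ℝ) : ℂ)) • X ^ 3
        + (((Real.cos a - Real.cos b : ℝ) : ℂ)) • X ^ 2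
        + ((((b ^ 3 * Real.sin a - a ^ 3 * Real.sin b) / (a * b) : ℝ) : ℂ)) • X
        + (((b ^ 2 * Real.cos a - a ^ 2 * Real.cos b : ℝ) : ℂ)) •
            (1 : Matrix (Fin n) (Fin n) ℂ)) := by
  let : NormedRing (Matrix (Fin n) (Fin n) ℂ) := Matrix.linftyOpNormedRing
  let : NormedAlgebra ℂ (Matrix (Fin n) (Fin n) ℂ) := Matrix.linftyOpNormedAlgebra
  have ha' : (a : ℂ) ≠ 0 := by exact_mod_cast ha.ne'
  have hb' : (b : ℂ) ≠ 0 := by exact_mod_cast hb.ne'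
  have hba : (b : ℂ) ^ 2 - a ^ 2 ≠ 0 := by
    exact_mod_cast sub_ne_zero.mpr ((sq_eq_sq₀ hb.le ha.le).not.mpr hab.symm)
  have hab' : -(a : ℂ) ^ 2 ≠ -(b : ℂ) ^ 2 := fun h => hba (by linear_combination h)
  have hquad : (X ^ 2 - (-(a : ℂ) ^ 2) • 1) * (X ^ 2 - (-(b : ℂ) ^ 2) • 1) = 0 := by
    have hθ' : (θ : ℂ) ^ 2 = a ^ 2 + b ^ 2 := by exact_mod_cast hsum.symm
    have hlam' : (lam : ℂ) ^ 2 = a ^ 2 * b ^ 2 := by exact_mod_cast hprod.symm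
    rw [hθ', hlam'] at hmin
    simp only [neg_smul, sub_neg_eq_add, add_mul, mul_add, smul_mul_assoc, mul_smul_comm, one_mul,
      mul_one, ← pow_add]
    linear_combination (norm := module) hmin
  obtain ⟨hP, hXa, hXb⟩ := spectral_projection_of_mul_sub_eq_zero hab' hquad
  refine (exp_eq_of_isIdempotentElem_of_commute ha' hb' hP ?_ hXa hXb).trans ?_
  · exact ((Commute.pow_right (Commute.refl X) 2).sub_right
      ((Commute.one_right X).smul_right _)).smul_right _
  simp only [mul_smul_comm, mul_sub, mul_one, ← pow_succ']
  match_scalars <;> push_cast [← Complex.ofReal_cos, ← Complex.ofReal_sin] <;> field_simp <;> ring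

theorem exp_of_quartic_minpoly {n : ℕ} (X : Matrix (Fin n) (Fin n) ℂ)
    (θ lam : ℝ) (hθ : θ ≠ 0) (hlam : lam ≠ 0) (hdisc : θ ^ 4 > 4 * lam ^ 2)
    (hmin : X ^ 4 + ((θ : ℂ) ^ 2) • X ^ 2
        + ((lam : ℂ) ^ 2) • (1 : Matrix (Fin n) (Fin n) ℂ) = 0)
    (a b : ℝ) (ha : 0 < a) (hb : 0 < b) (hab : a ≠ b)
    (hsum : a ^ 2 + b ^ 2 = θ ^ 2) (hprod : a ^ 2 * b ^ 2 = lam ^ 2) :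
    NormedSpace.exp X = (((1 / (b ^ 2 - a ^ 2) : ℝ) : ℂ)) •
      ((((( b * Real.sin a - a * Real.sin b) / (a * b) : ℝ) : ℂ)) • X ^ 3
        + (((Real.cos a - Real.cos b : ℝ) : ℂ)) • X ^ 2
        + ((((b ^ 3 * Real.sin a - a ^ 3 * Real.sin b) / (a * b) : ℝ) : ℂ)) • X
        + (((b ^ 2 * Real.cos a - a ^ 2 * Real.cos b : ℝ) : ℂ)) •
            (1 : Matrix (Fin n) (Fin n) ℂ)) :=
  exp_of_quartic_minpoly_general X θ lam hmin a b ha hb hab hsum hprod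
end

section
/- If Y ∈ M(2n, ℂ) satisfies Y* = -J Yᵀ J, then the characteristic polynomial of Y has real coefficients. -/
open Matrix Polynomial

lemma charpoly_transpose_aux {m : Type*} [Fintype m] [DecidableEq m]
    (M : Matrix m m ℂ) : Mᵀ.charpoly = M.charpoly := by
  unfold Matrix.charpoly
  rw [← det_transpose (charmatrix M)]
  congr 1
  unfold charmatrix
  rw [transpose_sub, scalar_apply, diagonal_transpose]
  rfl

lemma charpoly_similar_aux {m : Type*} [Fintype m] [DecidableEq m]
    (P Q A : Matrix m m ℂ) (hPQ : P * Q = 1) :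
    (P * A * Q).charpoly = A.charpoly := by
  unfold Matrix.charpoly charmatrix
  have hP : (C : ℂ →+* ℂ[X]).mapMatrix (P * A * Q)
      = C.mapMatrix P * C.mapMatrix A * C.mapMatrix Q := by
    simp [_root_.map_mul]
  have h1 : (C.mapMatrix P) * (C.mapMatrix Q) = 1 := by
    rw [← _root_.map_mul, hPQ, _root_.map_one]
  have hc : Matrix.scalar m (X : ℂ[X]) =
      C.mapMatrix P * Matrix.scalar m (X : ℂ[X]) * C.mapMatrix Q := by
    rw [← (scalar_commute (X : ℂ[X]) (Commute.all X) (C.mapMatrix P)).eq, mul_assoc, h1, mul_one]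
  calc (Matrix.scalar m (X : ℂ[X]) - C.mapMatrix (P * A * Q)).det
      = (C.mapMatrix P * (Matrix.scalar m (X : ℂ[X]) - C.mapMatrix A) * C.mapMatrix Q).det := by
        rw [hP, mul_sub, sub_mul, ← hc]
    _ = (Matrix.scalar m (X : ℂ[X]) - C.mapMatrix A).det := by
        have h2 : C.mapMatrix Q * C.mapMatrix P = 1 := by
          rw [← _root_.map_mul, mul_eq_one_comm.mp hPQ, _root_.map_one]
        rw [det_mul, det_mul, mul_comm ((C.mapMatrix P).det), mul_assoc, mul_comm ((C.mapMatrix P).det), ← det_mul, h2, det_one, mul_one]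

theorem charpoly_real_of_theta_H {n : ℕ}
    (Y : Matrix (Fin n ⊕ Fin n) (Fin n ⊕ Fin n) ℂ)
    (J : Matrix (Fin n ⊕ Fin n) (Fin n ⊕ Fin n) ℂ)
    (hJ : J = fromBlocks 0 1 (-1) 0)
    (h : Yᴴ = -(J * Yᵀ * J)) :
    ∀ k : ℕ, (Y.charpoly.coeff k).im = 0 := by
  have hJ2 : J * (-J) = 1 := by
    subst hJ
    rw [mul_neg, fromBlocks_multiply]
    simp [fromBlocks_neg, fromBlocks_one]
  have h' : Yᴴ = J * Yᵀ * (-J) := by rw [h]; rw [mul_neg]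
  have hsim : (Yᴴ).charpoly = (Yᵀ).charpoly := by
    rw [h']; exact charpoly_similar_aux J (-J) Yᵀ hJ2
  have hmap : (Yᴴ).charpoly = Y.charpoly.map (starRingEnd ℂ) := by
    have : Yᴴ = (Y.map (starRingEnd ℂ))ᵀ := rfl
    rw [this, charpoly_transpose_aux, charpoly_map]
  intro k
  have hco : (starRingEnd ℂ) (Y.charpoly.coeff k) = Y.charpoly.coeff k := by
    have := congrArg (fun p => p.coeff k)
      (hmap.symm.trans (hsim.trans (charpoly_transpose_aux Y)))
    simpa [coeff_map] using this
  exact Complex.conj_eq_iff_im.mp hco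
end

section
/- For Y ∈ sp(4) (Y* = -Y and Yᵀ J₄ = -J₄ Y), the characteristic polynomial of Y equals x⁴ + (½‖Y‖_F²)x² + det(Y), where ‖Y‖_F² = Tr(Y*Y). -/
/-!
Since `Yᵀ J = -J Y`, the matrix `-Y = J⁻¹ Yᵀ J` has the characteristic polynomial of `Y`, so
`χ_Y(-x) = χ_Y(x)` and `χ_Y = x⁴ + c x² + det Y`. From `(x - Y)(x + Y) = x² - Y²` we get
`χ_{Y²}(x²) = χ_Y(x) χ_{-Y}(x) = χ_Y(x)²`, and comparing the coefficients of `x⁶` gives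
`tr(Y²) = -2c`. Finally `Yᴴ = -Y` turns `-tr(Y²)` into `tr(Yᴴ Y)`.
-/

open Matrix Polynomial

namespace Polynomial

variable {R : Type*} [CommRing R]

theorem coeff_comp_neg_X (p : R[X]) (k : ℕ) :
    (p.comp (-X)).coeff k = (-1) ^ k * p.coeff k := by
  induction p using Polynomial.induction_on' with
  | add p q hp hq => simp [add_comp, hp, hq, mul_add]
  | monomial e a =>
    have hpow : (-X : R[X]) ^ e = C ((-1) ^ e) * X ^ e := by
      rw [neg_eq_neg_one_mul, mul_pow, C_pow, C_neg, C_1]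
    rw [← C_mul_X_pow_eq_monomial, mul_comp, C_comp, X_pow_comp, hpow, ← mul_assoc, ← C_mul,
      coeff_C_mul_X_pow, coeff_C_mul_X_pow]
    split_ifs with h
    · rw [h, mul_comm]
    · rw [mul_zero]

theorem coeff_eq_zero_of_comp_neg_X_eq_self [IsAddTorsionFree R] {p : R[X]}
    (hp : p.comp (-X) = p) {k : ℕ} (hk : Odd k) : p.coeff k = 0 := by
  have h := coeff_comp_neg_X p k
  rw [hp, hk.neg_one_pow, neg_one_mul] at h
  exact self_eq_neg.mp h

theorem Monic.eq_X_pow_four_add_of_comp_neg_X_eq_self [IsAddTorsionFree R] {p : R[X]}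
    (hmonic : p.Monic) (hdeg : p.natDegree = 4) (hp : p.comp (-X) = p) :
    p = X ^ 4 + C (p.coeff 2) * X ^ 2 + C (p.coeff 0) := by
  conv_lhs => rw [hmonic.as_sum, hdeg]
  simp [Finset.sum_range_succ, coeff_eq_zero_of_comp_neg_X_eq_self hp (by decide : Odd 1),
    coeff_eq_zero_of_comp_neg_X_eq_self hp (by decide : Odd 3)]
  ring

theorem coeff_six_sq_X_pow_four_add (a b : R) :
    ((X ^ 4 + C a * X ^ 2 + C b) ^ 2 : R[X]).coeff 6 = 2 * a := by
  have hsq : (X ^ 4 + C a * X ^ 2 + C b) ^ 2 = X ^ 8 + C (2 * a) * X ^ 6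
      + C (a ^ 2 + 2 * b) * X ^ 4 + C (2 * a * b) * X ^ 2 + C (b ^ 2) := by
    simp only [map_add, map_mul, map_pow, map_ofNat]
    ring
  rw [hsq]
  simp only [coeff_add, coeff_C_mul_X_pow, coeff_X_pow, coeff_C]
  norm_num

end Polynomial

namespace Matrix

variable {n R : Type*} [Fintype n] [DecidableEq n] [CommRing R]

theorem charpoly_comp_neg_X (M : Matrix n n R) :
    M.charpoly.comp (-X) = (-1) ^ Fintype.card n * (-M).charpoly := by
  have hmap : (aeval (-X : R[X])).mapMatrix (charmatrix M) = -charmatrix (-M) := by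
    ext i j : 1
    by_cases h : i = j
    · subst h
      simp [charmatrix_apply_eq]
      ring
    · simp [charmatrix_apply_ne _ _ _ h]
  rw [charpoly, comp_eq_aeval, AlgHom.map_det, hmap, det_neg, charpoly]

theorem expand_charpoly_sq (M : Matrix n n R) :
    expand R 2 (M ^ 2).charpoly = M.charpoly * (-M).charpoly := by
  rw [charpoly, charpoly, charpoly, AlgHom.map_det, ← det_mul]
  congr 1
  refine matPolyEquiv.injective ?_
  refine (matPolyEquiv_eq_X_pow_sub_C 2 M).trans ?_
  rw [map_mul, matPolyEquiv_charmatrix, matPolyEquiv_charmatrix, ← neg_sq M, map_pow,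
    (commute_X (C (-M))).sq_sub_sq, map_neg, ← sub_eq_add_neg]

theorem charpoly_neg_of_transpose_mul_eq_neg {J M : Matrix n n R} (hJ : IsUnit J)
    (hM : Mᵀ * J = -(J * M)) : (-M).charpoly = M.charpoly := by
  obtain ⟨U, rfl⟩ := hJ
  have hconj : -M = U.val⁻¹ * Mᵀ * U.val := by
    rw [mul_assoc, hM, mul_neg, ← mul_assoc]
    simp
  rw [hconj, charpoly_units_conj', charpoly_transpose]

end Matrix

theorem charpoly_sp4
    (Y : Matrix (Fin 2 ⊕ Fin 2) (Fin 2 ⊕ Fin 2) ℂ)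
    (J : Matrix (Fin 2 ⊕ Fin 2) (Fin 2 ⊕ Fin 2) ℂ)
    (hJ : J = fromBlocks 0 1 (-1) 0)
    (hanti : Yᴴ = -Y) (hsymp : Yᵀ * J = -(J * Y)) :
    Y.charpoly = Polynomial.X ^ 4
      + Polynomial.C ((1 / 2 : ℂ) * (Yᴴ * Y).trace) * Polynomial.X ^ 2
      + Polynomial.C Y.det := by
  have hcard : Fintype.card (Fin 2 ⊕ Fin 2) = 4 := rfl
  have hJ_unit : IsUnit J :=
    IsUnit.of_mul_eq_one (-J) (by simp [hJ, fromBlocks_multiply, fromBlocks_neg])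
  have hneg : (-Y).charpoly = Y.charpoly := charpoly_neg_of_transpose_mul_eq_neg hJ_unit hsymp
  have heven : Y.charpoly.comp (-X) = Y.charpoly := by
    rw [charpoly_comp_neg_X, hneg, hcard]
    norm_num
  have hquartic : Y.charpoly = X ^ 4 + C (Y.charpoly.coeff 2) * X ^ 2 + C (Y.charpoly.coeff 0) :=
    Y.charpoly_monic.eq_X_pow_four_add_of_comp_neg_X_eq_self
      (by rw [charpoly_natDegree_eq_dim, hcard]) heven
  have htrace : (Y * Y).trace = -(2 * Y.charpoly.coeff 2) :=
    calc (Y * Y).trace = -(Y ^ 2).charpoly.coeff 3 := by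
          rw [← sq, trace_eq_neg_charpoly_coeff, hcard]
      _ = -(expand ℂ 2 (Y ^ 2).charpoly).coeff 6 := by rw [coeff_expand two_pos]; norm_num
      _ = -(Y.charpoly ^ 2).coeff 6 := by rw [expand_charpoly_sq, hneg, sq]
      _ = -(2 * Y.charpoly.coeff 2) := by
          conv_lhs => rw [hquartic, coeff_six_sq_X_pow_four_add]
  have hdet : Y.det = Y.charpoly.coeff 0 := by
    rw [det_eq_sign_charpoly_coeff, hcard]
    norm_num
  refine hquartic.trans ?_
  rw [hanti, neg_mul, trace_neg, htrace, hdet, neg_neg, one_div,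
    inv_mul_cancel_left₀ two_ne_zero]
end

section
/- For Y ∈ sp(4) (Y* = -Y and Yᵀ J₄ = -J₄ Y), det(Y) is a nonnegative real number, and ‖Y‖_F⁴ ≥ 16·det(Y). -/
open Matrix

theorem my_det_fin_four {R : Type*} [CommRing R] (A : Matrix (Fin 4) (Fin 4) R) :
    A.det =
      A 0 0 * (A 1 1 * (A 2 2 * A 3 3 - A 2 3 * A 3 2) - A 1 2 * (A 2 1 * A 3 3 - A 2 3 * A 3 1) + A 1 3 * (A 2 1 * A 3 2 - A 2 2 * A 3 1))
    - A 0 1 * (A 1 0 * (A 2 2 * A 3 3 - A 2 3 * A 3 2) - A 1 2 * (A 2 0 * A 3 3 - A 2 3 * A 3 0) + A 1 3 * (A 2 0 * A 3 2 - A 2 2 * A 3 0))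
    + A 0 2 * (A 1 0 * (A 2 1 * A 3 3 - A 2 3 * A 3 1) - A 1 1 * (A 2 0 * A 3 3 - A 2 3 * A 3 0) + A 1 3 * (A 2 0 * A 3 1 - A 2 1 * A 3 0))
    - A 0 3 * (A 1 0 * (A 2 1 * A 3 2 - A 2 2 * A 3 1) - A 1 1 * (A 2 0 * A 3 2 - A 2 2 * A 3 0) + A 1 2 * (A 2 0 * A 3 1 - A 2 1 * A 3 0)) := by
  rw [Matrix.det_succ_row_zero, Fin.sum_univ_four]
  simp [Matrix.det_succ_row_zero, Fin.sum_univ_succ, Matrix.det_fin_two, Fin.succAbove]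
  norm_num [show (Fin.succ 2 : Fin 4) = 3 from rfl, show ((3:Fin 4):ℕ) = 3 from rfl, show (Fin.castSucc 2 : Fin 4) = 2 from rfl, show (if (2:Fin 4) < 3 then (2:Fin 4) else 3) = 2 from rfl]
  ring

theorem quat_ineq (Na Nb Nd w0 w1 w2 w3 D T : ℝ)
    (hNa : 0 ≤ Na) (hNb : 0 ≤ Nb) (hNd : 0 ≤ Nd)
    (hw : w0*w0 + w1*w1 + w2*w2 + w3*w3 = Na*Nb*Nb*Nd)
    (hD : D = Na*Nd + Nb*Nb - 2*w0)
    (hT : T = 2*(Na + 2*Nb + Nd)) :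
    0 ≤ D ∧ 16*D ≤ T^2 := by
  have h4 : 4*(w0*w0) ≤ (Na*Nd + Nb*Nb)^2 := by
    nlinarith [sq_nonneg (Na*Nd - Nb*Nb), sq_nonneg w1, sq_nonneg w2, sq_nonneg w3]
  have hs : 0 ≤ Na*Nd + Nb*Nb := by positivity
  constructor
  · nlinarith [h4, hs]
  · have hu : 0 ≤ Nb*(Na+Nd) := mul_nonneg hNb (add_nonneg hNa hNd)
    have hw2 : -(2*w0) ≤ Nb*(Na+Nd) := by
      nlinarith [hw, sq_nonneg w1, sq_nonneg w2, sq_nonneg w3, sq_nonneg (Nb*(Na-Nd)), hu]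
    nlinarith [hw2, sq_nonneg (Na-Nd), hNb, hu]

set_option maxHeartbeats 4000000 in
theorem det_nonneg_sp4
    (Y : Matrix (Fin 2 ⊕ Fin 2) (Fin 2 ⊕ Fin 2) ℂ)
    (J : Matrix (Fin 2 ⊕ Fin 2) (Fin 2 ⊕ Fin 2) ℂ)
    (hJ : J = fromBlocks 0 1 (-1) 0)
    (hanti : Yᴴ = -Y) (hsymp : Yᵀ * J = -(J * Y)) :
    Y.det.im = 0 ∧ 0 ≤ Y.det.re ∧
      16 * Y.det.re ≤ ((Yᴴ * Y).trace.re) ^ 2 := by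
  subst hJ
  have ha : ∀ i j, (starRingEnd ℂ) (Y j i) = -Y i j := by
    intro i j
    have := congrFun (congrFun hanti i) j
    simpa [Matrix.conjTranspose_apply] using this
  have hD : ∀ r s : Fin 2, Y (Sum.inr r) (Sum.inr s) = -Y (Sum.inl s) (Sum.inl r) := by
    intro r s
    have h := congrFun (congrFun hsymp (Sum.inl r)) (Sum.inr s)
    simp [Matrix.mul_apply, Fintype.sum_sum_type, Fin.sum_univ_two,
      Matrix.fromBlocks, Matrix.transpose_apply, Matrix.one_apply] at h
    linear_combination h
  have hB : Y (Sum.inl 1) (Sum.inr 0) = Y (Sum.inl 0) (Sum.inr 1) := by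
    have h := congrFun (congrFun hsymp (Sum.inr 0)) (Sum.inr 1)
    simp [Matrix.mul_apply, Fintype.sum_sum_type, Fin.sum_univ_two,
      Matrix.fromBlocks, Matrix.transpose_apply, Matrix.one_apply] at h
    linear_combination h
  -- entry rewrites
  have hm10 : Y (Sum.inl 1) (Sum.inl 0) = -(starRingEnd ℂ) (Y (Sum.inl 0) (Sum.inl 1)) := by
    linear_combination ha (Sum.inl 1) (Sum.inl 0)
  have hm20 : Y (Sum.inr 0) (Sum.inl 0) = -(starRingEnd ℂ) (Y (Sum.inl 0) (Sum.inr 0)) := by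
    linear_combination ha (Sum.inr 0) (Sum.inl 0)
  have hm21 : Y (Sum.inr 0) (Sum.inl 1) = -(starRingEnd ℂ) (Y (Sum.inl 0) (Sum.inr 1)) := by
    have h := ha (Sum.inr 0) (Sum.inl 1)
    rw [hB] at h
    linear_combination h
  have hm30 : Y (Sum.inr 1) (Sum.inl 0) = -(starRingEnd ℂ) (Y (Sum.inl 0) (Sum.inr 1)) := by
    linear_combination ha (Sum.inr 1) (Sum.inl 0)
  have hm31 : Y (Sum.inr 1) (Sum.inl 1) = -(starRingEnd ℂ) (Y (Sum.inl 1) (Sum.inr 1)) := by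
    linear_combination ha (Sum.inr 1) (Sum.inl 1)
  have hm22 : Y (Sum.inr 0) (Sum.inr 0) = -Y (Sum.inl 0) (Sum.inl 0) := hD 0 0
  have hm23 : Y (Sum.inr 0) (Sum.inr 1) = (starRingEnd ℂ) (Y (Sum.inl 0) (Sum.inl 1)) := by
    rw [hD 0 1, hm10]; ring
  have hm32 : Y (Sum.inr 1) (Sum.inr 0) = -Y (Sum.inl 0) (Sum.inl 1) := hD 1 0
  have hm33 : Y (Sum.inr 1) (Sum.inr 1) = -Y (Sum.inl 1) (Sum.inl 1) := hD 1 1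
  -- real parts of diagonal vanish
  have ha0 : (Y (Sum.inl 0) (Sum.inl 0)).re = 0 := by
    have h := congrArg Complex.re (ha (Sum.inl 0) (Sum.inl 0))
    simp at h; linarith
  have hd0 : (Y (Sum.inl 1) (Sum.inl 1)).re = 0 := by
    have h := congrArg Complex.re (ha (Sum.inl 1) (Sum.inl 1))
    simp at h; linarith
  -- determinant expansion
  have e0 : (finSumFinEquiv.symm : Fin (2+2) ≃ Fin 2 ⊕ Fin 2) 0 = Sum.inl 0 := rfl
  have e1 : (finSumFinEquiv.symm : Fin (2+2) ≃ Fin 2 ⊕ Fin 2) 1 = Sum.inl 1 := rfl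
  have e2 : (finSumFinEquiv.symm : Fin (2+2) ≃ Fin 2 ⊕ Fin 2) 2 = Sum.inr 0 := rfl
  have e3 : (finSumFinEquiv.symm : Fin (2+2) ≃ Fin 2 ⊕ Fin 2) 3 = Sum.inr 1 := rfl
  have hdet : Y.det = (Y.submatrix (finSumFinEquiv.symm : Fin (2+2) ≃ _) finSumFinEquiv.symm).det :=
    (Matrix.det_submatrix_equiv_self _ _).symm
  rw [my_det_fin_four] at hdet
  simp only [Matrix.submatrix_apply, e0, e1, e2, e3] at hdet
  rw [hm10, hB, hm20, hm21, hm30, hm31, hm22, hm23, hm32, hm33] at hdet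
  -- trace expansion
  have htr : (Yᴴ * Y).trace = ∑ j : Fin 2 ⊕ Fin 2, ∑ i : Fin 2 ⊕ Fin 2,
      (starRingEnd ℂ) (Y i j) * Y i j := by
    simp [Matrix.trace, Matrix.diag, Matrix.mul_apply, Matrix.conjTranspose_apply]
  rw [Fintype.sum_sum_type] at htr
  simp only [Fin.sum_univ_two, Fintype.sum_sum_type] at htr
  rw [hm10, hB, hm20, hm21, hm30, hm31, hm22, hm23, hm32, hm33] at htr
  -- pass to real and imaginary parts
  have hre := congrArg Complex.re hdet
  have him := congrArg Complex.im hdet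
  have htrre := congrArg Complex.re htr
  simp only [Complex.add_re, Complex.add_im, Complex.sub_re, Complex.sub_im,
    Complex.mul_re, Complex.mul_im, Complex.neg_re, Complex.neg_im,
    Complex.conj_re, Complex.conj_im] at hre him htrre
  rw [ha0, hd0] at hre him htrre
  set ai := (Y (Sum.inl 0) (Sum.inl 0)).im with hai
  set di := (Y (Sum.inl 1) (Sum.inl 1)).im with hdi
  set zr := (Y (Sum.inl 0) (Sum.inl 1)).re with hzr
  set zi := (Y (Sum.inl 0) (Sum.inl 1)).im with hzi
  set br11 := (Y (Sum.inl 0) (Sum.inr 0)).re with hbr11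
  set bi11 := (Y (Sum.inl 0) (Sum.inr 0)).im with hbi11
  set br12 := (Y (Sum.inl 0) (Sum.inr 1)).re with hbr12
  set bi12 := (Y (Sum.inl 0) (Sum.inr 1)).im with hbi12
  set br22 := (Y (Sum.inl 1) (Sum.inr 1)).re with hbr22
  set bi22 := (Y (Sum.inl 1) (Sum.inr 1)).im with hbi22
  clear_value ai di zr zi br11 bi11 br12 bi12 br22 bi22
  refine ⟨?_, ?_⟩
  · rw [him]; ring
  · have hNa' : (0:ℝ) ≤ ai^2 + br11^2 + bi11^2 := by positivity
    have hNb' : (0:ℝ) ≤ zr^2 + zi^2 + br12^2 + bi12^2 := by positivity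
    have hNd' : (0:ℝ) ≤ di^2 + br22^2 + bi22^2 := by positivity
    have hw' : (1*bi11*bi12*bi12*bi22 + 2*bi11*br12*bi12*br22 + (-1)*bi11*br12*br12*bi22 + (-1)*br11*bi12*bi12*br22 + 2*br11*br12*bi12*bi22 + 1*br11*br12*br12*br22 + (-1)*zi*zi*bi11*bi22 + (-1)*zi*zi*br11*br22 + 2*zr*zi*bi11*br22 + (-2)*zr*zi*br11*bi22 + 1*zr*zr*bi11*bi22 + 1*zr*zr*br11*br22 + 2*di*zi*bi11*bi12 + 2*di*zi*br11*br12 + (-2)*di*zr*bi11*br12 + 2*di*zr*br11*bi12 + 2*ai*zi*bi12*bi22 + 2*ai*zi*br12*br22 + (-2)*ai*zr*bi12*br22 + 2*ai*zr*br12*bi22 + (-1)*ai*di*bi12*bi12 + (-1)*ai*di*br12*br12 + 1*ai*di*zi*zi + 1*ai*di*zr*zr)*(1*bi11*bi12*bi12*bi22 + 2*bi11*br12*bi12*br22 + (-1)*bi11*br12*br12*bi22 + (-1)*br11*bi12*bi12*br22 + 2*br11*br12*bi12*bi22 + 1*br11*br12*br12*br22 + (-1)*zi*zi*bi11*bi22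 + (-1)*zi*zi*br11*br22 + 2*zr*zi*bi11*br22 + (-2)*zr*zi*br11*bi22 + 1*zr*zr*bi11*bi22 + 1*zr*zr*br11*br22 + 2*di*zi*bi11*bi12 + 2*di*zi*br11*br12 + (-2)*di*zr*bi11*br12 + 2*di*zr*br11*bi12 + 2*ai*zi*bi12*bi22 + 2*ai*zi*br12*br22 + (-2)*ai*zr*bi12*br22 + 2*ai*zr*br12*bi22 + (-1)*ai*di*bi12*bi12 + (-1)*ai*di*br12*br12 + 1*ai*di*zi*zi + 1*ai*di*zr*zr) + ((-1)*bi11*bi12*bi12*br22 + 2*bi11*br12*bi12*bi22 + 1*bi11*br12*br12*br22 + (-1)*br11*bi12*bi12*bi22 + (-2)*br11*br12*bi12*br22 + 1*br11*br12*br12*bi22 + (-1)*zi*zi*bi11*br22 + 1*zi*zi*br11*bi22 + (-2)*zr*zi*bi11*bi22 + (-2)*zr*zi*br11*br22 + 1*zr*zr*bi11*br22 + (-1)*zr*zr*br11*bi22 + 2*di*zi*bi11*br12 + (-2)*di*zi*br11*bi12 + 2*di*zr*bi11*bi12 + 2*di*zr*br11*br12)*((-1)*bi11*bi12*bi12*br22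 + 2*bi11*br12*bi12*bi22 + 1*bi11*br12*br12*br22 + (-1)*br11*bi12*bi12*bi22 + (-2)*br11*br12*bi12*br22 + 1*br11*br12*br12*bi22 + (-1)*zi*zi*bi11*br22 + 1*zi*zi*br11*bi22 + (-2)*zr*zi*bi11*bi22 + (-2)*zr*zi*br11*br22 + 1*zr*zr*bi11*br22 + (-1)*zr*zr*br11*bi22 + 2*di*zi*bi11*br12 + (-2)*di*zi*br11*bi12 + 2*di*zr*bi11*bi12 + 2*di*zr*br11*br12) + ((-2)*zi*bi11*bi12*bi22 + (-2)*zi*bi11*br12*br22 + 2*zr*bi11*bi12*br22 + (-2)*zr*bi11*br12*bi22 + 1*di*bi11*bi12*bi12 + 1*di*bi11*br12*br12 + (-1)*di*zi*zi*bi11 + (-1)*di*zr*zr*bi11 + 1*ai*bi12*bi12*bi22 + 2*ai*br12*bi12*br22 + (-1)*ai*br12*br12*bi22 + (-1)*ai*zi*zi*bi22 + 2*ai*zr*zi*br22 + 1*ai*zr*zr*bi22 + 2*ai*di*zi*bi12 + (-2)*ai*di*zr*br12)*((-2)*zi*bi11*bi12*bi22 + (-2)*zi*bi11*br12*br22 +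 2*zr*bi11*bi12*br22 + (-2)*zr*bi11*br12*bi22 + 1*di*bi11*bi12*bi12 + 1*di*bi11*br12*br12 + (-1)*di*zi*zi*bi11 + (-1)*di*zr*zr*bi11 + 1*ai*bi12*bi12*bi22 + 2*ai*br12*bi12*br22 + (-1)*ai*br12*br12*bi22 + (-1)*ai*zi*zi*bi22 + 2*ai*zr*zi*br22 + 1*ai*zr*zr*bi22 + 2*ai*di*zi*bi12 + (-2)*ai*di*zr*br12) + (2*zi*br11*bi12*bi22 + 2*zi*br11*br12*br22 + (-2)*zr*br11*bi12*br22 + 2*zr*br11*br12*bi22 + (-1)*di*br11*bi12*bi12 + (-1)*di*br11*br12*br12 + 1*di*zi*zi*br11 + 1*di*zr*zr*br11 + 1*ai*bi12*bi12*br22 + (-2)*ai*br12*bi12*bi22 + (-1)*ai*br12*br12*br22 + 1*ai*zi*zi*br22 + 2*ai*zr*zi*bi22 + (-1)*ai*zr*zr*br22 + (-2)*ai*di*zi*br12 + (-2)*ai*di*zr*bi12)*(2*zi*br11*bi12*bi22 + 2*zi*br11*br12*br22 + (-2)*zr*br11*bi12*br22 + 2*zr*br11*br12*bi22 + (-1)*di*br11*bi12*bi12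 + (-1)*di*br11*br12*br12 + 1*di*zi*zi*br11 + 1*di*zr*zr*br11 + 1*ai*bi12*bi12*br22 + (-2)*ai*br12*bi12*bi22 + (-1)*ai*br12*br12*br22 + 1*ai*zi*zi*br22 + 2*ai*zr*zi*bi22 + (-1)*ai*zr*zr*br22 + (-2)*ai*di*zi*br12 + (-2)*ai*di*zr*bi12) = (ai^2 + br11^2 + bi11^2)*(zr^2 + zi^2 + br12^2 + bi12^2)*(zr^2 + zi^2 + br12^2 + bi12^2)*(di^2 + br22^2 + bi22^2) := by ring
    have hD' : Y.det.re = (ai^2 + br11^2 + bi11^2)*(di^2 + br22^2 + bi22^2) + (zr^2 + zi^2 + br12^2 + bi12^2)*(zr^2 + zi^2 + br12^2 + bi12^2) - 2*(1*bi11*bi12*bi12*bi22 + 2*bi11*br12*bi12*br22 + (-1)*bi11*br12*br12*bi22 + (-1)*br11*bi12*bi12*br22 + 2*br11*br12*bi12*bi22 + 1*br11*br12*br12*br22 + (-1)*zi*zi*bi11*bi22 + (-1)*zi*zi*br11*br22 + 2*zr*zi*bi11*br22 + (-2)*zr*zi*br11*bi22 + 1*zr*zr*bi11*bi22 + 1*zr*zr*br11*br22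 + 2*di*zi*bi11*bi12 + 2*di*zi*br11*br12 + (-2)*di*zr*bi11*br12 + 2*di*zr*br11*bi12 + 2*ai*zi*bi12*bi22 + 2*ai*zi*br12*br22 + (-2)*ai*zr*bi12*br22 + 2*ai*zr*br12*bi22 + (-1)*ai*di*bi12*bi12 + (-1)*ai*di*br12*br12 + 1*ai*di*zi*zi + 1*ai*di*zr*zr) := by
      rw [hre]; ring
    have hT' : (Yᴴ * Y).trace.re = 2*((ai^2 + br11^2 + bi11^2) + 2*(zr^2 + zi^2 + br12^2 + bi12^2) + (di^2 + br22^2 + bi22^2)) := by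
      rw [htrre]; ring
    exact quat_ineq _ _ _ _ _ _ _ _ _ hNa' hNb' hNd' hw' hD' hT'
end

section
/- Let Y ∈ sp(4) be nonzero with det(Y) = 0. Then Y³ + (½‖Y‖_F²)·Y = 0. -/
/-!
Since `Yᵀ J = -J Y`, the matrix `-Y` is conjugate to `Yᵀ`, so `χ(Y) = χ(-Y)` and hence
`χ(Y)² = χ(Y) χ(-Y) = det (X² - Y²)`, an even polynomial. For a monic quartic this forces
`χ(Y) = X⁴ - ½ tr(Y²) X² + det Y`, and Cayley–Hamilton with `det Y = 0` gives
`Y⁴ + c Y² = 0` with `c = -½ tr(Y²) = ½ ‖Y‖_F²` real. The skew-Hermitian matrix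
`Z = Y³ + c Y` then satisfies `Z² = (Y² + c) (Y⁴ + c Y²) = 0`, so `Zᴴ Z = 0` and `Z = 0`.
-/

open Matrix Polynomial

namespace Polynomial

variable {K : Type*} [Field K] [NeZero (2 : K)]

theorem coeff_of_mul_self_eq_expand_two {p q : K[X]} (hp : p.Monic) (hdeg : p.natDegree = 4)
    (h : p * p = expand K 2 q) :
    p.coeff 3 = 0 ∧ p.coeff 1 = 0 ∧ 2 * p.coeff 2 = q.coeff 3 := by
  have hcoeff (k : ℕ) : (p * p).coeff k = (expand K 2 q).coeff k := by rw [h]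
  have h4 : p.coeff 4 = 1 := hdeg ▸ hp.coeff_natDegree
  have hhigh (k : ℕ) (hk : 4 < k) : p.coeff k = 0 := coeff_eq_zero_of_natDegree_lt (hdeg ▸ hk)
  have h7 := hcoeff 7
  have h6 := hcoeff 6
  have h5 := hcoeff 5
  simp only [coeff_mul, Finset.Nat.sum_antidiagonal_eq_sum_range_succ_mk, Finset.sum_range_succ,
    Finset.sum_range_zero, coeff_expand two_pos] at h7 h6 h5
  norm_num [hhigh, h4] at h7 h6 h5
  have h3 : p.coeff 3 = 0 :=
    (mul_eq_zero.mp (by linear_combination h7 : (2 : K) * p.coeff 3 = 0)).resolve_left two_ne_zero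
  have h1 : p.coeff 1 = 0 := by
    refine (mul_eq_zero.mp (?_ : (2 : K) * p.coeff 1 = 0)).resolve_left two_ne_zero
    linear_combination h5 - 2 * p.coeff 2 * h3
  exact ⟨h3, h1, by linear_combination h6 - p.coeff 3 * h3⟩

end Polynomial

namespace Matrix

variable {n : Type*} [Fintype n] [DecidableEq n]

section CommRing

variable {R : Type*} [CommRing R]

theorem charpoly_mul_charpoly_neg (M : Matrix n n R) :
    M.charpoly * (-M).charpoly = expand R 2 (M * M).charpoly := by
  have hexp : (expand R 2).mapMatrix (M * M).charmatrix
      = scalar n (X ^ 2 : R[X]) - C.mapMatrix (M * M) := by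
    ext i j : 1
    by_cases h : i = j <;> simp [h, mul_apply, map_sum]
  rw [charpoly, charpoly, charpoly, ← det_mul, AlgHom.map_det, hexp, charmatrix, charmatrix,
    map_neg, sub_neg_eq_add, map_mul, pow_two, map_mul]
  congr 1
  rw [sub_mul, mul_add, mul_add, ← (scalar_commute X (Commute.all X) (C.mapMatrix M)).eq]
  abel

theorem charpoly_neg_eq_of_transpose_mul_eq_neg {J Y : Matrix n n R} (hJ : IsUnit J)
    (h : Yᵀ * J = -(J * Y)) : (-Y).charpoly = Y.charpoly := by
  obtain ⟨u, rfl⟩ := hJ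
  have hconj : -Y = u.val⁻¹ * Yᵀ * u.val := by
    rw [Matrix.mul_assoc, h, Matrix.mul_neg, ← Matrix.mul_assoc]
    simp
  rw [hconj, charpoly_units_conj', charpoly_transpose]

end CommRing

theorem pow_four_sub_smul_add_det_smul_eq_zero_of_charpoly_neg_eq {K : Type*} [Field K] [NeZero (2 : K)]
    {Y : Matrix n n K} (hn : Fintype.card n = 4) (h : (-Y).charpoly = Y.charpoly) :
    Y ^ 4 - ((Y * Y).trace / 2) • Y ^ 2 + Y.det • (1 : Matrix n n K) = 0 := by
  have hdeg : Y.charpoly.natDegree = 4 := hn ▸ charpoly_natDegree_eq_dim Y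
  obtain ⟨h3, h1, h2⟩ := coeff_of_mul_self_eq_expand_two (charpoly_monic Y) hdeg
    (h ▸ charpoly_mul_charpoly_neg Y)
  have h4 : Y.charpoly.coeff 4 = 1 := hdeg ▸ (charpoly_monic Y).coeff_natDegree
  have htr : (Y * Y).charpoly.coeff 3 = -(Y * Y).trace := by
    have : Nonempty n := Fintype.card_pos_iff.mp (by omega)
    rw [trace_eq_neg_charpoly_coeff, hn, neg_neg]
  have h2' : Y.charpoly.coeff 2 = -((Y * Y).trace / 2) := by
    rw [eq_neg_iff_add_eq_zero]
    field_simp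
    linear_combination h2 + htr
  have hdet : Y.charpoly.coeff 0 = Y.det := by
    rw [det_eq_sign_charpoly_coeff, hn]
    norm_num
  have hCH := aeval_self_charpoly Y
  rw [aeval_eq_sum_range, hdeg] at hCH
  simp only [Finset.sum_range_succ, Finset.sum_range_zero, h4, h3, h2', h1, hdet, pow_zero]
    at hCH
  rw [← hCH]
  module

section RCLike

variable {𝕜 : Type*} [RCLike 𝕜]

open scoped ComplexOrder

omit [DecidableEq n] in
theorem eq_zero_of_conjTranspose_eq_neg_of_mul_self_eq_zero {Z : Matrix n n 𝕜}
    (hZ : Zᴴ = -Z) (h : Z * Z = 0) : Z = 0 :=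
  conjTranspose_mul_self_eq_zero.mp (by rw [hZ, Matrix.neg_mul, h, neg_zero])

theorem pow_three_add_smul_eq_zero_of_conjTranspose_eq_neg {Y : Matrix n n 𝕜} (hY : Yᴴ = -Y)
    {c : 𝕜} (hc : star c = c) (h : Y ^ 4 + c • Y ^ 2 = 0) : Y ^ 3 + c • Y = 0 := by
  apply eq_zero_of_conjTranspose_eq_neg_of_mul_self_eq_zero
  · rw [conjTranspose_add, conjTranspose_smul, conjTranspose_pow, hY, hc,
      Odd.neg_pow (by decide), smul_neg, neg_add]
  · have hZ : Y ^ 3 + c • Y = aeval Y (X ^ 3 + C c * X) := by simp [Algebra.smul_def]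
    have hQ : Y ^ 4 + c • Y ^ 2 = aeval Y (X ^ 4 + C c * X ^ 2) := by simp [Algebra.smul_def]
    rw [hZ, ← map_mul, show (X ^ 3 + C c * X) * (X ^ 3 + C c * X)
      = (X ^ 2 + C c) * (X ^ 4 + C c * X ^ 2) by ring, map_mul, ← hQ, h, Matrix.mul_zero]

end RCLike

end Matrix

theorem cubic_minpoly_sp4_general
    (Y : Matrix (Fin 2 ⊕ Fin 2) (Fin 2 ⊕ Fin 2) ℂ)
    (J : Matrix (Fin 2 ⊕ Fin 2) (Fin 2 ⊕ Fin 2) ℂ)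
    (hJ : J = fromBlocks 0 1 (-1) 0)
    (hanti : Yᴴ = -Y) (hsymp : Yᵀ * J = -(J * Y))
    (hdet : Y.det = 0) :
    Y ^ 3 + ((1 / 2 : ℂ) * (Yᴴ * Y).trace) • Y = 0 := by
  have hJunit : IsUnit J :=
    IsUnit.of_mul_eq_one (-J) (by subst hJ; simp [fromBlocks_multiply, fromBlocks_neg])
  have hquartic := pow_four_sub_smul_add_det_smul_eq_zero_of_charpoly_neg_eq (by simp)
    (charpoly_neg_eq_of_transpose_mul_eq_neg hJunit hsymp)
  rw [hdet, zero_smul, add_zero, sub_eq_add_neg, ← neg_smul] at hquartic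
  have hc : (1 / 2 : ℂ) * (Yᴴ * Y).trace = -((Y * Y).trace / 2) := by
    rw [hanti, Matrix.neg_mul, trace_neg]
    ring
  refine pow_three_add_smul_eq_zero_of_conjTranspose_eq_neg hanti ?_ (hc ▸ hquartic)
  rw [star_mul', ← trace_conjTranspose, conjTranspose_mul, conjTranspose_conjTranspose]
  simp

theorem cubic_minpoly_sp4
    (Y : Matrix (Fin 2 ⊕ Fin 2) (Fin 2 ⊕ Fin 2) ℂ)
    (J : Matrix (Fin 2 ⊕ Fin 2) (Fin 2 ⊕ Fin 2) ℂ)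
    (hJ : J = fromBlocks 0 1 (-1) 0)
    (hanti : Yᴴ = -Y) (hsymp : Yᵀ * J = -(J * Y))
    (hY : Y ≠ 0) (hdet : Y.det = 0) :
    Y ^ 3 + ((1 / 2 : ℂ) * (Yᴴ * Y).trace) • Y = 0 :=
  cubic_minpoly_sp4_general Y J hJ hanti hsymp hdet
end
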